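/- arXiv:2204.09013 — 4 statements merged into one kernel-verified Lean document; each statement's English description precedes it below -/
import Mathlib

section
/- Let $u, v \in S_n$ with $v$ a $k$-Grassmannian permutation (i.e., $v(1) < \cdots < v(k)$ and $v(k+1) < \cdots < v(n)$). Then $u \leq v$ in Bruhat order if and only if $u(j) \leq v(j)$ for all $1 \leq j \leq k$ and $u(m) \geq v(m)$ for all $k < m \leq n$. -/
/-- Gale order on subsets of `Fin n`: compare the `h`-th smallest elements. -/
abbrev galeLE {n : ℕ} (I J : Finset (Fin n)) : Prop :=
  I.card = J.card ∧
    ∀ h < I.card, ((I.sort (· ≤ ·)).map Fin.val).getD h 0 ≤ ((J.sort (· ≤ ·)).map Fin.val).getD h 0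

/-- The initial set `y[k] = {y(1),...,y(k)}` of a permutation. -/
def initSet {n : ℕ} (y : Equiv.Perm (Fin n)) (k : ℕ) : Finset (Fin n) :=
  (Finset.univ.filter fun j : Fin n => j.val < k).image y

/-- Bruhat order via the tableau criterion. -/
def bruhatLE {n : ℕ} (u v : Equiv.Perm (Fin n)) : Prop :=
  ∀ k : ℕ, galeLE (initSet u k) (initSet v k)

/-- `v` is `k`-Grassmannian: increasing on the first `k` positions and on the rest. -/
def isGrassmannian {n : ℕ} (v : Equiv.Perm (Fin n)) (k : ℕ) : Prop :=
  (∀ i j : Fin n, i < j → j.val < k → v i < v j) ∧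
    (∀ i j : Fin n, i < j → k ≤ i.val → v i < v j)

/-- The points `a,b,c,d` occur (weakly) in this clockwise cyclic order. -/
abbrev cyclic4 (a b c d : ℕ) : Prop :=
  ((if b < a then 1 else 0) + (if c < b then 1 else 0) +
      (if d < c then 1 else 0) + (if a < d then 1 else 0) : ℕ) ≤ 1

/-- Arcs `i ↦ w i` and `j ↦ w j` form an alignment (in this order):
the points occur clockwise as `i, w i, w j, j`. -/
abbrev isAlignment {n : ℕ} (w : Equiv.Perm (Fin n)) (i j : Fin n) : Prop :=
  i ≠ j ∧ cyclic4 i.val (w i).val (w j).val j.val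

/-- Arcs `i ↦ w i` and `j ↦ w j` form a misalignment (in this order):
the points occur clockwise as `i, w i, j, w j`. -/
abbrev isMisalignment {n : ℕ} (w : Equiv.Perm (Fin n)) (i j : Fin n) : Prop :=
  i ≠ j ∧ cyclic4 i.val (w i).val j.val (w j).val

/-- `x` lies strictly inside the clockwise open arc from `a` to `b`. -/
abbrev cIoo (a b x : ℕ) : Prop :=
  (a < b ∧ a < x ∧ x < b) ∨ (b ≤ a ∧ (x < b ∨ a < x))

/-- Arcs `i ↦ w i` and `j ↦ w j` must cross: exactly one endpoint of the second
arc lies strictly inside the clockwise arc from `i` to `w i`. -/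
abbrev isCrossing {n : ℕ} (w : Equiv.Perm (Fin n)) (i j : Fin n) : Prop :=
  i ≠ j ∧ Xor' (cIoo i.val (w i).val j.val) (cIoo i.val (w i).val (w j).val)

/-- The shifted anti-exceedance set `I_r(w) = {i : i <_r w⁻¹ i}` (0-indexed start `r`). -/
abbrev antiExc {n : ℕ} (w : Equiv.Perm (Fin n)) (r : Fin n) : Finset (Fin n) :=
  Finset.univ.filter fun i => (i - r).val < (w.symm i - r).val

/-- The shifted Gale order `⪯_r`, obtained by rotating so that `r` is smallest. -/
abbrev shiftedGaleLE {n : ℕ} (r : Fin n) (I J : Finset (Fin n)) : Prop :=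
  galeLE (I.image fun x => x - r) (J.image fun x => x - r)

/-- The collection `{y[k] : y ∈ [u,v]}`. -/
def intervalBases {n : ℕ} (u v : Equiv.Perm (Fin n)) (k : ℕ) : Set (Finset (Fin n)) :=
  {I | ∃ y : Equiv.Perm (Fin n), bruhatLE u y ∧ bruhatLE y v ∧ initSet y k = I}

/-!
Counting the elements below a threshold turns the Gale order into domination of counting
functions, so `u ≤ v` says `r_v(m, t) ≤ r_u(m, t)` for the rank numbers
`r_y(m, t) = #{j < m | y j ≤ t}`; since the `y j` with `j < m` and with `j ≥ m` together fill
`{0, …, t}`, this is equivalent to the reverse inequality of the tail counts. For `m ≤ k` the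
first inequality follows from `u j ≤ v j` on positions `< k`, for `m > k` the second follows
from `v j ≤ u j` on the rest. Conversely, as `v` is increasing on `{0, …, j}` for `j < k`,
`r_v(j + 1, v j) = j + 1`, which forces every `u i` with `i ≤ j` below `v j`; dually, as `v` is
increasing from position `m ≥ k` on, a tail position `i ≥ m` with `v i ≤ u m` gives `v m ≤ u m`.
-/

open Finset

theorem Monotone.le_iff_lt_card_filter_le {α : Type*} [LinearOrder α] {c : ℕ} {f : Fin c → α}
    (hf : Monotone f) (h : Fin c) (t : α) : f h ≤ t ↔ h.val < #{i | f i ≤ t} := by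
  constructor
  · intro hht
    have hsub : Iic h ⊆ ({i | f i ≤ t} : Finset (Fin c)) := fun i hi =>
      mem_filter.2 ⟨mem_univ i, (hf (mem_Iic.1 hi)).trans hht⟩
    simpa [Fin.card_Iic] using card_le_card hsub
  · intro hlt
    by_contra! hth
    have hsub : ({i | f i ≤ t} : Finset (Fin c)) ⊆ Iio h := fun i hi =>
      mem_Iio.2 (lt_of_not_ge fun hhi => (hth.trans_le (hf hhi)).not_ge (mem_filter.1 hi).2)
    simpa [Fin.card_Iio] using (card_le_card hsub).trans_lt' hlt

theorem Monotone.forall_le_iff_card_filter_le {α : Type*} [LinearOrder α] {c : ℕ}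
    {f g : Fin c → α} (hf : Monotone f) (hg : Monotone g) :
    (∀ i, f i ≤ g i) ↔ ∀ t, #{i | g i ≤ t} ≤ #{i | f i ≤ t} := by
  constructor
  · intro hfg t
    by_contra! hlt
    have hc : #{i | f i ≤ t} < c := hlt.trans_le ((card_filter_le _ _).trans_eq (card_fin c))
    let h : Fin c := ⟨#{i | f i ≤ t}, hc⟩
    have hgh : g h ≤ t := (hg.le_iff_lt_card_filter_le h t).2 hlt
    exact ((hf.le_iff_lt_card_filter_le h t).1 ((hfg h).trans hgh)).false
  · intro hcard i
    rw [hf.le_iff_lt_card_filter_le]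
    exact ((hg.le_iff_lt_card_filter_le i (g i)).1 le_rfl).trans_le (hcard (g i))

section

variable {n : ℕ}

theorem Finset.card_filter_le_eq_orderEmbOfFin {k : ℕ} (I : Finset (Fin n)) (hI : #I = k)
    (t : Fin n) : #{x ∈ I | x ≤ t} = #{i | I.orderEmbOfFin hI i ≤ t} := by
  conv_lhs => rw [← I.map_orderEmbOfFin_univ hI, filter_map, card_map]
  rfl

theorem Finset.sort_getD_eq_orderEmbOfFin {k : ℕ} (I : Finset (Fin n)) (hI : #I = k)
    (i : Fin k) : ((I.sort (· ≤ ·)).map Fin.val).getD i 0 = (I.orderEmbOfFin hI i).val := by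
  rw [List.getD_eq_getElem _ _ (by simp [hI]), List.getElem_map, orderEmbOfFin_apply]
  rfl

theorem galeLE_iff_card_filter_le (I J : Finset (Fin n)) :
    galeLE I J ↔ #I = #J ∧ ∀ t, #{x ∈ J | x ≤ t} ≤ #{x ∈ I | x ≤ t} := by
  refine and_congr_right fun hIJ => ?_
  simp only [card_filter_le_eq_orderEmbOfFin I hIJ, card_filter_le_eq_orderEmbOfFin J rfl,
    ← Monotone.forall_le_iff_card_filter_le (I.orderEmbOfFin hIJ).monotone
      (J.orderEmbOfFin rfl).monotone]
  constructor
  · intro hsorted i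
    have := hsorted i (hIJ.symm ▸ i.isLt)
    rwa [sort_getD_eq_orderEmbOfFin I hIJ i, sort_getD_eq_orderEmbOfFin J rfl i] at this
  · intro hle h hh
    have hh' : h < #J := hIJ ▸ hh
    rw [sort_getD_eq_orderEmbOfFin I hIJ ⟨h, hh'⟩, sort_getD_eq_orderEmbOfFin J rfl ⟨h, hh'⟩]
    exact hle _

theorem isGrassmannian.strictMonoOn_lt {k : ℕ} {v : Equiv.Perm (Fin n)}
    (hv : isGrassmannian v k) : StrictMonoOn v {i | i.val < k} :=
  fun _ _ _ hj hij => hv.1 _ _ hij hj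

theorem isGrassmannian.strictMonoOn_ge {k : ℕ} {v : Equiv.Perm (Fin n)}
    (hv : isGrassmannian v k) : StrictMonoOn v {i | k ≤ i.val} :=
  fun _ hi _ _ hij => hv.2 _ _ hij hi

def initRank (y : Equiv.Perm (Fin n)) (m : ℕ) (t : Fin n) : ℕ :=
  #{j | j.val < m ∧ y j ≤ t}

def tailRank (y : Equiv.Perm (Fin n)) (m : ℕ) (t : Fin n) : ℕ :=
  #{j | m ≤ j.val ∧ y j ≤ t}

theorem card_filter_initSet_le (y : Equiv.Perm (Fin n)) (m : ℕ) (t : Fin n) :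
    #{x ∈ initSet y m | x ≤ t} = initRank y m t := by
  rw [initSet, filter_image, card_image_of_injective _ y.injective, filter_filter]
  rfl

theorem card_initSet (y : Equiv.Perm (Fin n)) (m : ℕ) :
    #(initSet y m) = #{j : Fin n | j.val < m} :=
  card_image_of_injective _ y.injective

theorem bruhatLE_iff_initRank_le (u v : Equiv.Perm (Fin n)) :
    bruhatLE u v ↔ ∀ m t, initRank v m t ≤ initRank u m t := by
  simp only [bruhatLE, galeLE_iff_card_filter_le, card_initSet, card_filter_initSet_le,
    true_and]

theorem initRank_add_tailRank (y : Equiv.Perm (Fin n)) (m : ℕ) (t : Fin n) :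
    initRank y m t + tailRank y m t = t.val + 1 := by
  have htotal : #{j | y j ≤ t} = t.val + 1 := by
    rw [← Fin.card_Iic t]
    exact card_equiv y fun j => by simp
  rw [← htotal, ← card_filter_add_card_filter_not (s := {j | y j ≤ t}) (fun j => j.val < m),
    filter_filter, filter_filter]
  simp only [initRank, tailRank, not_lt, and_comm]

theorem initRank_le_initRank_iff_tailRank_le (u v : Equiv.Perm (Fin n)) (m : ℕ) (t : Fin n) :
    initRank v m t ≤ initRank u m t ↔ tailRank u m t ≤ tailRank v m t := by
  have hu := initRank_add_tailRank u m t
  have hv := initRank_add_tailRank v m t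
  omega

theorem initRank_le_initRank_of_le {u v : Equiv.Perm (Fin n)} {m : ℕ}
    (h : ∀ j : Fin n, j.val < m → u j ≤ v j) (t : Fin n) : initRank v m t ≤ initRank u m t :=
  card_le_card fun j hj => by
    simp only [mem_filter, mem_univ, true_and] at hj ⊢
    exact ⟨hj.1, (h j hj.1).trans hj.2⟩

theorem tailRank_le_tailRank_of_le {u v : Equiv.Perm (Fin n)} {m : ℕ}
    (h : ∀ j : Fin n, m ≤ j.val → v j ≤ u j) (t : Fin n) : tailRank u m t ≤ tailRank v m t :=
  card_le_card fun j hj => by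
    simp only [mem_filter, mem_univ, true_and] at hj ⊢
    exact ⟨hj.1, (h j hj.1).trans hj.2⟩

theorem le_of_initRank_le {u v : Equiv.Perm (Fin n)} {j : Fin n} (hv : ∀ i ≤ j, v i ≤ v j)
    (H : initRank v (j.val + 1) (v j) ≤ initRank u (j.val + 1) (v j)) : u j ≤ v j := by
  set S : Finset (Fin n) := {i | i.val < j.val + 1}
  have hrank (y : Equiv.Perm (Fin n)) :
      initRank y (j.val + 1) (v j) = #{i ∈ S | y i ≤ v j} := by
    rw [initRank, filter_filter]
  have hvS : #{i ∈ S | v i ≤ v j} = #S :=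
    card_filter_eq_iff.2 fun i hi => hv i (Fin.le_iff_val_le_val.2 (by simpa [S] using hi))
  rw [hrank, hrank, hvS] at H
  have huS := card_filter_eq_iff.1 (H.antisymm' (card_filter_le _ _))
  exact huS j (by simp [S])

theorem le_of_tailRank_le {u v : Equiv.Perm (Fin n)} {m : Fin n} (hv : ∀ i ≥ m, v m ≤ v i)
    (H : tailRank u m.val (u m) ≤ tailRank v m.val (u m)) : v m ≤ u m := by
  have hu : 0 < tailRank u m.val (u m) := card_pos.2 ⟨m, by simp⟩
  obtain ⟨i, hi⟩ := card_pos.1 (hu.trans_le H)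
  simp only [mem_filter, mem_univ, true_and] at hi
  exact (hv i (Fin.le_iff_val_le_val.2 hi.1)).trans hi.2

end

/-- Bergeron–Sottile criterion: for `v` a `k`-Grassmannian permutation,
`u ≤ v` in Bruhat order iff `u(j) ≤ v(j)` for positions `j` in the first `k`
and `u(m) ≥ v(m)` for the remaining positions. -/
theorem bruhat_le_grassmannian_iff (n k : ℕ) (u v : Equiv.Perm (Fin n))
    (hv : isGrassmannian v k) :
    bruhatLE u v ↔
      ((∀ j : Fin n, j.val < k → u j ≤ v j) ∧ (∀ m : Fin n, k ≤ m.val → v m ≤ u m)) := by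
  rw [bruhatLE_iff_initRank_le]
  refine ⟨fun H => ⟨fun j hj => ?_, fun m hm => ?_⟩, fun ⟨hinit, htail⟩ m t => ?_⟩
  · refine le_of_initRank_le (fun i hij => ?_) (H _ _)
    exact hv.strictMonoOn_lt.monotoneOn (Nat.lt_of_le_of_lt hij hj) hj hij
  · refine le_of_tailRank_le (fun i hmi => ?_) ?_
    · exact hv.strictMonoOn_ge.monotoneOn hm (hm.trans hmi) hmi
    · exact (initRank_le_initRank_iff_tailRank_le u v _ _).1 (H _ _)
  · rcases le_or_gt m k with hmk | hkm
    · exact initRank_le_initRank_of_le (fun j hj => hinit j (hj.trans_le hmk)) t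
    · exact (initRank_le_initRank_iff_tailRank_le u v m t).2
        (tailRank_le_tailRank_of_le (fun j hj => htail j (hkm.le.trans hj)) t)
end

section
/- Let $w \in S_n$ be a permutation with no fixed points (a derangement). For $r \in [n]$, let $I_r(w) = \{i \in [n] : i <_r w^{-1}(i)\}$ be the shifted anti-exceedance set, where $<_r$ is the cyclic shift of the usual order starting at $r$. Then $|I_1(w)| = |I_2(w)| = \cdots = |I_n(w)|$. -/
/-!
Write `d(i) = (i - w⁻¹ i) mod n`. Measured in the `r`-shifted order, `d(i)` is the difference of
the shifted positions of `i` and `w⁻¹ i`, plus `n` exactly when `i <_r w⁻¹ i`. Summing over `i`,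
the shifted positions cancel because `w⁻¹` permutes them, so `n · |I_r(w)| = ∑ᵢ d(i)`, which does
not depend on `r`.
-/

theorem Fin.val_sub_add_val {n : ℕ} (a b : Fin n) :
    (a - b).val + b.val = a.val + if a < b then n else 0 := by
  split_ifs with h
  · rw [Fin.coe_sub_iff_lt.2 h]
    omega
  · rw [Fin.sub_val_of_le (not_lt.1 h)]
    omega

theorem mul_card_antiExc {n : ℕ} (w : Equiv.Perm (Fin n)) (r : Fin n) :
    n * (antiExc w r).card = ∑ i, (i - w.symm i).val := by
  have := NeZero.of_pos r.pos
  have hshift (i : Fin n) : (i - w.symm i).val + (w.symm i - r).val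
      = (i - r).val + if i - r < w.symm i - r then n else 0 := by
    rw [← Fin.val_sub_add_val, sub_sub_sub_cancel_right]
  have hperm : ∑ i, (w.symm i - r).val = ∑ i, (i - r).val :=
    Equiv.sum_comp w.symm fun i => (i - r).val
  have hsum := Finset.sum_congr (s₁ := Finset.univ) rfl fun i _ => hshift i
  rw [Finset.sum_add_distrib, Finset.sum_add_distrib, hperm] at hsum
  simp only [Fin.lt_def] at hsum
  rw [Finset.card_filter, Finset.mul_sum]
  simp only [mul_ite, mul_one, mul_zero]
  omega

theorem antiExc_card_const_general (n : ℕ) (w : Equiv.Perm (Fin n)) :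
    ∀ r r' : Fin n, (antiExc w r).card = (antiExc w r').card := fun r r' =>
  Nat.eq_of_mul_eq_mul_left r.pos ((mul_card_antiExc w r).trans (mul_card_antiExc w r').symm)

/-- All shifted anti-exceedance sets of a derangement have the same cardinality. -/
theorem antiExc_card_const (n : ℕ) (w : Equiv.Perm (Fin n)) (hw : ∀ i, w i ≠ i) :
    ∀ r r' : Fin n, (antiExc w r).card = (antiExc w r').card :=
  antiExc_card_const_general n w
end

section
/- For consecutive shifted anti-exceedance sets of a derangement $w \in S_n$: $I_{r+1}(w) = (I_r(w) \setminus \{r\}) \cup \{w(r)\}$ if $r \in I_r(w)$ and $w(r) \notin I_r(w)$, and more precisely, $I_{r+1}(w)$ differs from $I_r(w)$ only possibly in the elements $r$ and $w(r)$. -/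
/-! Moving the start of the cyclic order from `r` to `r + 1` lowers every relative position
`(x - r)` by one, which preserves comparisons except where a position wraps around from `0`
to `n - 1`, i.e. at `i = r` and at `w⁻¹ i = r`. -/

theorem Fin.val_sub_one_lt_val_sub_one_iff {n : ℕ} [NeZero n] {a b : Fin n} :
    (a - 1).val < (b - 1).val ↔ a ≠ 0 ∧ (b = 0 ∨ a.val < b.val) := by
  obtain ⟨m, rfl⟩ := Nat.exists_eq_succ_of_ne_zero (NeZero.ne n)
  have ha := a.isLt
  have hb := b.isLt
  simp only [Fin.coe_sub_one, ne_eq, Fin.ext_iff, Fin.val_zero]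
  split_ifs <;> omega

theorem mem_antiExc_add_one_iff {n : ℕ} [NeZero n] {w : Equiv.Perm (Fin n)} {r i : Fin n} :
    i ∈ antiExc w (r + 1) ↔ i ≠ r ∧ (i = w r ∨ i ∈ antiExc w r) := by
  simp only [antiExc, Finset.mem_filter, Finset.mem_univ, true_and, ← sub_sub, ne_eq,
    Fin.val_sub_one_lt_val_sub_one_iff, sub_eq_zero, Equiv.symm_apply_eq]

theorem antiExc_succ_general (n : ℕ) [NeZero n] (w : Equiv.Perm (Fin n)) (r : Fin n) :
    ((antiExc w (r + 1) \ antiExc w r) ∪ (antiExc w r \ antiExc w (r + 1))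
      ⊆ ({r, w r} : Finset (Fin n))) ∧
    (r ∈ antiExc w r → w r ∉ antiExc w r →
      antiExc w (r + 1) = insert (w r) ((antiExc w r).erase r)) := by
  refine ⟨fun i hi => ?_, fun hr _ => ?_⟩
  · simp only [Finset.mem_union, Finset.mem_sdiff, mem_antiExc_add_one_iff] at hi
    simp only [Finset.mem_insert, Finset.mem_singleton]
    tauto
  · have hwr : w r ≠ r := fun hfix => by
      have : w.symm r = r := by rw [Equiv.symm_apply_eq, hfix]
      simp [this] at hr
    ext i
    simp only [mem_antiExc_add_one_iff, Finset.mem_insert, Finset.mem_erase]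
    constructor
    · tauto
    · rintro (rfl | h)
      · exact ⟨hwr, .inl rfl⟩
      · tauto

/-- Consecutive shifted anti-exceedance sets differ only in the elements `r` and `w r`;
if `r ∈ I_r(w)` and `w r ∉ I_r(w)`, then `I_{r+1}(w) = (I_r(w) \ {r}) ∪ {w r}`. -/
theorem antiExc_succ (n : ℕ) [NeZero n] (w : Equiv.Perm (Fin n)) (hw : ∀ i, w i ≠ i) (r : Fin n) :
    ((antiExc w (r + 1) \ antiExc w r) ∪ (antiExc w r \ antiExc w (r + 1))
      ⊆ ({r, w r} : Finset (Fin n))) ∧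
    (r ∈ antiExc w r → w r ∉ antiExc w r →
      antiExc w (r + 1) = insert (w r) ((antiExc w r).erase r)) :=
  antiExc_succ_general n w r
end

section
/- Let $w \in S_n$ be a derangement with anti-exceedance set $J = I_1(w)$ of size $k$. If $a \in J$, $b \notin J$, and $b < a$, then $(J \setminus \{a\}) \cup \{b\} \notin \mathcal{M}(w)$. -/
section auxGale
variable {α : Type*} [LinearOrder α] [DecidableEq α]

lemma aux_count_le (A : Finset α) {k : ℕ} (hA : A.card = k) (i : Fin k) :
    i.val + 1 ≤ (A.filter (· ≤ A.orderEmbOfFin hA i)).card := by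
  have hsub : (Finset.Iic i).image (A.orderEmbOfFin hA) ⊆
      A.filter (· ≤ A.orderEmbOfFin hA i) := by
    intro x hx
    simp only [Finset.mem_image, Finset.mem_Iic] at hx
    obtain ⟨j, hj, rfl⟩ := hx
    exact Finset.mem_filter.2 ⟨A.orderEmbOfFin_mem hA j, (A.orderEmbOfFin hA).monotone hj⟩
  have h1 := Finset.card_le_card hsub
  rwa [Finset.card_image_of_injective _ (A.orderEmbOfFin hA).injective, Fin.card_Iic] at h1

lemma aux_le_of_count (K : Finset α) {k : ℕ} (hK : K.card = k) (i : Fin k) (v : α)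
    (h : i.val + 1 ≤ (K.filter (· ≤ v)).card) : K.orderEmbOfFin hK i ≤ v := by
  by_contra hlt
  push_neg at hlt
  have hsub : K.filter (· ≤ v) ⊆ (Finset.Iio i).image (K.orderEmbOfFin hK) := by
    intro x hx
    rw [Finset.mem_filter] at hx
    have hx1 : x ∈ Set.range (K.orderEmbOfFin hK) := by
      rw [Finset.range_orderEmbOfFin]; exact hx.1
    obtain ⟨j, rfl⟩ := hx1
    have hji : j < i := by
      have : K.orderEmbOfFin hK j < K.orderEmbOfFin hK i := lt_of_le_of_lt hx.2 hlt
      exact (K.orderEmbOfFin hK).lt_iff_lt.mp this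
    exact Finset.mem_image.2 ⟨j, Finset.mem_Iio.2 hji, rfl⟩
  have h2 := (Finset.card_le_card hsub).trans Finset.card_image_le
  rw [Fin.card_Iio] at h2
  omega

end auxGale

lemma aux_getD_sort {n : ℕ} (A : Finset (Fin n)) {k : ℕ} (hA : A.card = k) (i : Fin k) :
    ((A.sort (· ≤ ·)).map Fin.val).getD i 0 = (A.orderEmbOfFin hA i).val := by
  have hi : i.val < ((A.sort (· ≤ ·)).map Fin.val).length := by
    simpa [Finset.length_sort, hA] using i.2
  rw [List.getD_eq_getElem _ _ hi, List.getElem_map, Finset.orderEmbOfFin_apply, Fin.getElem_fin]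

/-- For a derangement `w` with anti-exceedance set `J = I_1(w)`, any exchange with
`b < a` produces a non-basis: if `a ∈ J`, `b ∉ J` and `b < a`, then
`(J \ {a}) ∪ {b} ∉ M(w)`. -/
theorem exchange_lt_not_basis (n : ℕ) [NeZero n] (w : Equiv.Perm (Fin n))
    (hw : ∀ i, w i ≠ i) (a b : Fin n)
    (ha : a ∈ antiExc w 0) (hb : b ∉ antiExc w 0) (hba : b < a) :
    ¬ ∀ r : Fin n, shiftedGaleLE r (antiExc w r) (insert b ((antiExc w 0).erase a)) := by
    classical
  intro H
  set J := antiExc w 0 with hJdef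
  set K := insert b (J.erase a) with hKdef
  have hbK : b ∈ K := Finset.mem_insert_self _ _
  have hbJ : b ∉ J := hb
  have hbe : b ∉ J.erase a := fun h => hbJ (Finset.mem_of_mem_erase h)
  have hJpos : 0 < J.card := Finset.card_pos.2 ⟨a, ha⟩
  have hKcard : K.card = J.card := by
    rw [hKdef, Finset.card_insert_of_notMem hbe, Finset.card_erase_of_mem ha]
    omega
  have H0 := H 0
  simp only [shiftedGaleLE, sub_zero, Finset.image_id'] at H0
  obtain ⟨hc, hle⟩ := H0
  -- counting inequality: J has at most as many elements ≤ v as K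
  have hcount : ∀ v : Fin n, (J.filter (· ≤ v)).card ≤ (K.filter (· ≤ v)).card := by
    intro v
    rw [hKdef, Finset.filter_insert, Finset.filter_erase]
    by_cases hv : b ≤ v
    · rw [if_pos hv]
      have hbf : b ∉ (J.filter (· ≤ v)).erase a := fun h =>
        hbJ (Finset.mem_of_mem_filter _ (Finset.mem_of_mem_erase h))
      rw [Finset.card_insert_of_notMem hbf]
      have h1 := Finset.pred_card_le_card_erase (s := J.filter (· ≤ v)) (a := a)
      omega
    · rw [if_neg hv]
      have hav : a ∉ J.filter (· ≤ v) := by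
        intro h
        exact hv (le_trans hba.le (Finset.mem_filter.mp h).2)
      rw [Finset.erase_eq_of_notMem hav]
  -- reverse Gale inequality
  have hrev : ∀ i : Fin J.card, K.orderEmbOfFin hKcard i ≤ J.orderEmbOfFin rfl i := by
    intro i
    exact aux_le_of_count K hKcard i _ ((aux_count_le J rfl i).trans (hcount _))
  -- forward Gale inequality from the hypothesis
  have hfwd : ∀ i : Fin J.card, J.orderEmbOfFin rfl i ≤ K.orderEmbOfFin hKcard i := by
    intro i
    have h1 := hle i.val i.2
    rw [aux_getD_sort J rfl i, aux_getD_sort K hKcard i] at h1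
    exact h1
  have hfun : ⇑(J.orderEmbOfFin rfl) = ⇑(K.orderEmbOfFin hKcard) :=
    funext fun i => le_antisymm (hfwd i) (hrev i)
  have hcoe : (J : Set (Fin n)) = (K : Set (Fin n)) := by
    rw [← Finset.range_orderEmbOfFin J rfl, ← Finset.range_orderEmbOfFin K hKcard, hfun]
  exact hbJ ((Finset.coe_injective hcoe) ▸ hbK)
end
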